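/- In the coevolutionary action–opinion coordination game, fix a player i with parameters γ ≥ 0, β > 0, λ > 0, and let ȳ = ∑_j w_{ij} y_j and δ = γ·∑_j a_{ij} x_j + (2βλ/(β+λ))·ȳ. Then the maximizers of the payoff f_i over the joint strategy set {−1,+1} × [−1,1] are characterized as follows: if δ > 0 the unique maximizer is (+1, (βȳ + λ)/(β+λ)); if δ < 0 the unique maximizer is (−1, (βȳ − λ)/(β+λ)); and if δ = 0 the maximizers are exactly these two points. -/
import Mathlib


open Finset

/-- Payoff of player `i` in the coevolutionary action–opinion coordination game for
choosing the pair `(a,b) ∈ {-1,+1} × [-1,1]` against the actions `x` and opinions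
`y` of the others. -/
noncomputable def coevCoordPayoff (n : ℕ) (A W : Fin n → Fin n → ℝ)
    (γ β lam : ℝ) (i : Fin n) (x y : Fin n → ℝ) (a b : ℝ) : ℝ :=
  γ / 4 * ∑ j, A i j * ((1 - x j) * (1 - a) + (1 + x j) * (1 + a))
    - β / 2 * ∑ j, W i j * (b - y j) ^ 2
    - lam / 2 * (a - b) ^ 2

/-- `(a,b)` is a maximizer of `f` over the joint strategy set `{-1,+1} × [-1,1]`. -/
def IsJointMaximizer (f : ℝ → ℝ → ℝ) (a b : ℝ) : Prop :=
  (a = -1 ∨ a = 1) ∧ b ∈ Set.Icc (-1 : ℝ) 1 ∧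
    ∀ a' b' : ℝ, (a' = -1 ∨ a' = 1) → b' ∈ Set.Icc (-1 : ℝ) 1 → f a' b' ≤ f a b

set_option maxHeartbeats 2000000 in
/-- In the coevolutionary action–opinion coordination game, with
`ȳ = ∑_j w_{ij} y_j` and discriminant `δ = γ ∑_j a_{ij} x_j + (2βλ/(β+λ)) ȳ`, the
maximizers of player `i`'s payoff over `{-1,+1} × [-1,1]` are: for `δ > 0` uniquely
`(+1, (βȳ+λ)/(β+λ))`; for `δ < 0` uniquely `(-1, (βȳ-λ)/(β+λ))`; and for `δ = 0`
exactly these two points. -/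
theorem coev_coordination_best_response_characterization
    (n : ℕ) (A W : Fin n → Fin n → ℝ)
    (hA : ∀ i j, 0 ≤ A i j) (hAdiag : ∀ i, A i i = 0) (hArow : ∀ i, ∑ j, A i j = 1)
    (hW : ∀ i j, 0 ≤ W i j) (hWdiag : ∀ i, W i i = 0) (hWrow : ∀ i, ∑ j, W i j = 1)
    (γ β lam : ℝ) (hγ : 0 ≤ γ) (hβ : 0 < β) (hlam : 0 < lam)
    (i : Fin n) (x y : Fin n → ℝ)
    (hx : ∀ j, x j = -1 ∨ x j = 1) (hy : ∀ j, y j ∈ Set.Icc (-1 : ℝ) 1)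
    (ybar δ : ℝ)
    (hybar : ybar = ∑ j, W i j * y j)
    (hδ : δ = γ * ∑ j, A i j * x j + 2 * β * lam / (β + lam) * ybar) :
    (δ > 0 → ∀ a b : ℝ,
      (IsJointMaximizer (coevCoordPayoff n A W γ β lam i x y) a b ↔
        a = 1 ∧ b = (β * ybar + lam) / (β + lam))) ∧
    (δ < 0 → ∀ a b : ℝ,
      (IsJointMaximizer (coevCoordPayoff n A W γ β lam i x y) a b ↔
        a = -1 ∧ b = (β * ybar - lam) / (β + lam))) ∧
    (δ = 0 → ∀ a b : ℝ,
      (IsJointMaximizer (coevCoordPayoff n A W γ β lam i x y) a b ↔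
        ((a = 1 ∧ b = (β * ybar + lam) / (β + lam)) ∨
          (a = -1 ∧ b = (β * ybar - lam) / (β + lam))))) := by
  have hbl : (0:ℝ) < β + lam := by linarith
  have hne : β + lam ≠ 0 := ne_of_gt hbl
  set s : ℝ := ∑ j, A i j * x j with hs
  set T : ℝ := ∑ j, W i j * (y j)^2 with hT
  set F := coevCoordPayoff n A W γ β lam i x y with hF
  have key : ∀ a b : ℝ, F a b
      = (γ/2 - β/2 * T) + γ*s*a/2 - (β+lam)/2 * (b - (β*ybar+lam*a)/(β+lam))^2
        + (β*ybar+lam*a)^2/(2*(β+lam)) - lam*a^2/2 := by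
    intro a b
    have h1 : ∑ j, A i j * ((1 - x j) * (1 - a) + (1 + x j) * (1 + a))
        = 2 + 2*a*s := by
      have e : ∀ j ∈ Finset.univ, A i j * ((1 - x j) * (1 - a) + (1 + x j) * (1 + a))
          = 2 * A i j + 2*a*(A i j * x j) := by intro j _; ring
      rw [Finset.sum_congr rfl e, Finset.sum_add_distrib, ← Finset.mul_sum,
        ← Finset.mul_sum, hArow i, ← hs]
      ring
    have h2 : ∑ j, W i j * (b - y j)^2 = b^2 - 2*ybar*b + T := by
      have e : ∀ j ∈ Finset.univ, W i j * (b - y j)^2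
          = b^2 * W i j - 2*b*(W i j * y j) + W i j * (y j)^2 := by intro j _; ring
      rw [Finset.sum_congr rfl e]
      rw [Finset.sum_add_distrib, Finset.sum_sub_distrib, ← Finset.mul_sum,
        ← Finset.mul_sum, hWrow i, ← hybar, ← hT]
      ring
    rw [hF]
    unfold coevCoordPayoff
    rw [h1, h2]
    field_simp
    ring
  have hyb1 : -1 ≤ ybar := by
    rw [hybar]
    calc (-1:ℝ) = ∑ j, W i j * (-1) := by
          rw [← Finset.sum_mul, hWrow i]; ring
      _ ≤ ∑ j, W i j * y j :=
          Finset.sum_le_sum fun j _ => mul_le_mul_of_nonneg_left (hy j).1 (hW i j)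
  have hyb2 : ybar ≤ 1 := by
    rw [hybar]
    calc ∑ j, W i j * y j
        ≤ ∑ j, W i j * 1 :=
          Finset.sum_le_sum fun j _ => mul_le_mul_of_nonneg_left (hy j).2 (hW i j)
      _ = 1 := by rw [← Finset.sum_mul, hWrow i]; ring
  have hbyb1 : β * ybar ≤ β := by nlinarith
  have hbyb2 : -β ≤ β * ybar := by nlinarith
  have hbpIcc : (β*ybar+lam)/(β+lam) ∈ Set.Icc (-1:ℝ) 1 := by
    constructor
    · rw [le_div_iff₀ hbl]; linarith
    · rw [div_le_one hbl]; linarith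
  have hbmIcc : (β*ybar-lam)/(β+lam) ∈ Set.Icc (-1:ℝ) 1 := by
    constructor
    · rw [le_div_iff₀ hbl]; linarith
    · rw [div_le_one hbl]; linarith
  -- gap identities
  have hgap1 : ∀ b : ℝ, F 1 b
      = F 1 ((β*ybar+lam)/(β+lam)) - (β+lam)/2 * (b - (β*ybar+lam)/(β+lam))^2 := by
    intro b; rw [key, key]; field_simp; ring
  have hgap2 : ∀ b : ℝ, F (-1) b
      = F (-1) ((β*ybar-lam)/(β+lam)) - (β+lam)/2 * (b - (β*ybar-lam)/(β+lam))^2 := by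
    intro b; rw [key, key]; field_simp; ring
  have hdiff : F 1 ((β*ybar+lam)/(β+lam)) - F (-1) ((β*ybar-lam)/(β+lam)) = δ := by
    rw [key, key, hδ]; field_simp; ring
  have le1 : ∀ b : ℝ, F 1 b ≤ F 1 ((β*ybar+lam)/(β+lam)) := by
    intro b
    have h := hgap1 b
    nlinarith [sq_nonneg (b - (β*ybar+lam)/(β+lam))]
  have le2 : ∀ b : ℝ, F (-1) b ≤ F (-1) ((β*ybar-lam)/(β+lam)) := by
    intro b
    have h := hgap2 b
    nlinarith [sq_nonneg (b - (β*ybar-lam)/(β+lam))]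
  have eq1 : ∀ b : ℝ, F 1 ((β*ybar+lam)/(β+lam)) ≤ F 1 b → b = (β*ybar+lam)/(β+lam) := by
    intro b hle
    have h := hgap1 b
    have hq : (0:ℝ) < (β+lam)/2 := by linarith
    have hsq : (b - (β*ybar+lam)/(β+lam))^2 ≤ 0 := by
      by_contra hcon
      push_neg at hcon
      have := mul_pos hq hcon
      linarith
    have : (b - (β*ybar+lam)/(β+lam))^2 = 0 := le_antisymm hsq (sq_nonneg _)
    have := sq_eq_zero_iff.mp this
    exact sub_eq_zero.mp this
  have eq2 : ∀ b : ℝ, F (-1) ((β*ybar-lam)/(β+lam)) ≤ F (-1) b → b = (β*ybar-lam)/(β+lam) := by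
    intro b hle
    have h := hgap2 b
    have hq : (0:ℝ) < (β+lam)/2 := by linarith
    have hsq : (b - (β*ybar-lam)/(β+lam))^2 ≤ 0 := by
      by_contra hcon
      push_neg at hcon
      have := mul_pos hq hcon
      linarith
    have : (b - (β*ybar-lam)/(β+lam))^2 = 0 := le_antisymm hsq (sq_nonneg _)
    have := sq_eq_zero_iff.mp this
    exact sub_eq_zero.mp this
  refine ⟨?_, ?_, ?_⟩
  · -- δ > 0
    intro hpos a b
    constructor
    · rintro ⟨ha, hb, hmax⟩
      have h1 : F 1 ((β*ybar+lam)/(β+lam)) ≤ F a b := hmax _ _ (Or.inr rfl) hbpIcc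
      rcases ha with rfl | rfl
      · exfalso; have := le2 b; linarith
      · exact ⟨rfl, eq1 b h1⟩
    · rintro ⟨rfl, rfl⟩
      refine ⟨Or.inr rfl, hbpIcc, ?_⟩
      rintro a' b' (rfl|rfl) hb'
      · have := le2 b'; linarith
      · exact le1 b'
  · -- δ < 0
    intro hneg a b
    constructor
    · rintro ⟨ha, hb, hmax⟩
      have h1 : F (-1) ((β*ybar-lam)/(β+lam)) ≤ F a b := hmax _ _ (Or.inl rfl) hbmIcc
      rcases ha with rfl | rfl
      · exact ⟨rfl, eq2 b h1⟩
      · exfalso; have := le1 b; linarith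
    · rintro ⟨rfl, rfl⟩
      refine ⟨Or.inl rfl, hbmIcc, ?_⟩
      rintro a' b' (rfl|rfl) hb'
      · exact le2 b'
      · have := le1 b'; linarith
  · -- δ = 0
    intro hzero a b
    constructor
    · rintro ⟨ha, hb, hmax⟩
      rcases ha with rfl | rfl
      · have h1 : F 1 ((β*ybar+lam)/(β+lam)) ≤ F (-1) b := hmax _ _ (Or.inr rfl) hbpIcc
        have h2 : F (-1) ((β*ybar-lam)/(β+lam)) ≤ F (-1) b := by linarith
        exact Or.inr ⟨rfl, eq2 b h2⟩
      · have h1 : F (-1) ((β*ybar-lam)/(β+lam)) ≤ F 1 b := hmax _ _ (Or.inl rfl) hbmIcc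
        have h2 : F 1 ((β*ybar+lam)/(β+lam)) ≤ F 1 b := by linarith
        exact Or.inl ⟨rfl, eq1 b h2⟩
    · rintro (⟨rfl, rfl⟩ | ⟨rfl, rfl⟩)
      · refine ⟨Or.inr rfl, hbpIcc, ?_⟩
        rintro a' b' (rfl|rfl) hb'
        · have := le2 b'; linarith
        · exact le1 b'
      · refine ⟨Or.inl rfl, hbmIcc, ?_⟩
        rintro a' b' (rfl|rfl) hb'
        · exact le2 b'
        · have := le1 b'; linarith
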